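/- arXiv:1010.0515 — 3 statements merged into one kernel-verified Lean document; each statement's English description precedes it below -/
import Mathlib

section
/- For all u, w ∈ S_n there exists v ∈ S_n with v ≤ u, v ≤ w and al(v,u) + al(v,w) = ℓ′(u·w⁻¹) = n − c(u·w⁻¹). -/
/-!
Write `d(σ) = ∑ (|c| - 1)`, summed over the cycles `c` of `σ`, so that `d(σ) = n - c(σ)`.
Multiplying `σ` by the transposition `(a σ(a))` splits `a` off its cycle and lowers `d` by one;
conjugating by such a transposition reduces any transposition `t` to this case, whence
`d(tσ) ≤ d(σ) + 1`. So `d` is the absolute length, and along a Bruhat path from `v` to `u` the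
value `d(· w⁻¹)` changes by at most one per edge: `d(uw⁻¹) ≤ al(v,u) + al(v,w)` for every common
lower bound `v`.

Conversely, let `x = uw⁻¹ ≠ 1`. If neither `(a x(a))·u → u` nor `(a x⁻¹(a))·w → w` were a Bruhat
edge for any `a`, then `u⁻¹` and `w⁻¹ = u⁻¹x` would order the pairs `a, x(a)` and `x⁻¹(a), a`
like the identity, and together `x⁻¹(a) < a` would force `a < x(a)`: impossible at the largest
point moved by `x`. Each such edge lowers `d(uw⁻¹)` by one, and induction on `d(uw⁻¹)` produces
`v` with `al(v,u) + al(v,w) ≤ d(uw⁻¹)`.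
-/

open Equiv

/-- The length of a permutation: its number of inversions. -/
def len {n : ℕ} (w : Perm (Fin n)) : ℕ :=
  (Finset.univ.filter (fun p : Fin n × Fin n => p.1 < p.2 ∧ w p.2 < w p.1)).card

/-- Directed edge of the Bruhat graph on `S_n`. -/
def edge {n : ℕ} (x y : Perm (Fin n)) : Prop :=
  (∃ t : Perm (Fin n), t.IsSwap ∧ y = t * x) ∧ len x < len y

/-- The Bruhat order: `u ≤ w` iff `u = w` or there is a directed path from `u` to `w`. -/
def bruhatLe {n : ℕ} (u w : Perm (Fin n)) : Prop :=
  Relation.ReflTransGen edge u w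

/-- `reachesIn r m u w` : there is a directed path with `m` edges from `u` to `w`. -/
def reachesIn {α : Type*} (r : α → α → Prop) : ℕ → α → α → Prop
  | 0, u, w => u = w
  | (m+1), u, w => ∃ v, r u v ∧ reachesIn r m v w

/-- `al u w` : the minimum number of edges of a directed path from `u` to `w`
in the Bruhat graph. -/
noncomputable def al {n : ℕ} (u w : Perm (Fin n)) : ℕ :=
  sInf {m | reachesIn edge m u w}

/-- The absolute length: least `k` such that `v` is a product of `k` transpositions. -/
noncomputable def absLen {n : ℕ} (v : Perm (Fin n)) : ℕ :=
  sInf {k | ∃ l : List (Perm (Fin n)), l.length = k ∧ (∀ t ∈ l, t.IsSwap) ∧ l.prod = v}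

/-- The number of cycles of `v` on `{1,…,n}`, including fixed points: the number of
nontrivial cycles in the disjoint cycle decomposition plus the number of fixed points. -/
def numCycles {n : ℕ} (v : Perm (Fin n)) : ℕ :=
  v.cycleFactorsFinset.card + (Finset.univ.filter (fun i : Fin n => v i = i)).card

open Finset

namespace Equiv.Perm

section CycleDefect

variable {α : Type*} [Fintype α] [DecidableEq α]

def cycleDefect (σ : Perm α) : ℕ := (σ.cycleType.map (· - 1)).sum

@[simp]
theorem cycleDefect_one : cycleDefect (1 : Perm α) = 0 := by
  simp [cycleDefect]

@[simp]
theorem cycleDefect_inv (σ : Perm α) : cycleDefect σ⁻¹ = cycleDefect σ := by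
  rw [cycleDefect, cycleType_inv, cycleDefect]

theorem cycleDefect_mul_inv_comm (σ τ : Perm α) :
    cycleDefect (σ * τ⁻¹) = cycleDefect (τ * σ⁻¹) := by
  rw [← cycleDefect_inv, mul_inv_rev, inv_inv]

theorem Disjoint.cycleDefect_mul {σ τ : Perm α} (h : Disjoint σ τ) :
    cycleDefect (σ * τ) = cycleDefect σ + cycleDefect τ := by
  rw [cycleDefect, h.cycleType_mul, Multiset.map_add, Multiset.sum_add, cycleDefect, cycleDefect]

theorem IsCycle.cycleDefect_eq {σ : Perm α} (h : IsCycle σ) : cycleDefect σ = #σ.support - 1 := by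
  simp [cycleDefect, h.cycleType]

theorem cycleDefect_add_card_cycleType (σ : Perm α) :
    cycleDefect σ + Multiset.card σ.cycleType = #σ.support := by
  have hk : ∀ k ∈ σ.cycleType, k - 1 + 1 = k := fun k hk => by
    have := two_le_of_mem_cycleType hk
    omega
  calc cycleDefect σ + Multiset.card σ.cycleType = (σ.cycleType.map fun k => k - 1 + 1).sum := by
        rw [Multiset.sum_map_add]; simp [cycleDefect]
    _ = #σ.support := by rw [Multiset.map_congr rfl hk, Multiset.map_id', sum_cycleType]

theorem IsCycle.cycleDefect_swap_mul_add_one {c : Perm α} (hc : IsCycle c) {a : α}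
    (ha : c a ≠ a) : cycleDefect (swap a (c a) * c) + 1 = cycleDefect c := by
  rw [hc.cycleDefect_eq]
  by_cases hcca : c (c a) = a
  · have hcs : c = swap a (c a) := hc.eq_swap_of_apply_apply_eq_self ha hcca
    have h1 : swap a (c a) * c = 1 := by
      conv_lhs => rhs; rw [hcs]
      exact swap_mul_self _ _
    have h2 : #c.support = 2 := by rw [hcs]; exact card_support_swap ha.symm
    rw [h1, h2, cycleDefect_one]
  · rw [(hc.swap_mul ha hcca).cycleDefect_eq, support_swap_mul_eq c a hcca,
      card_sdiff_of_subset (singleton_subset_iff.2 (mem_support.2 ha)), card_singleton]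
    have := hc.two_le_card_support
    omega

theorem cycleDefect_swap_mul_add_one {σ : Perm α} {a : α} (ha : σ a ≠ a) :
    cycleDefect (swap a (σ a) * σ) + 1 = cycleDefect σ := by
  set c := σ.cycleOf a
  have hca : c a = σ a := cycleOf_apply_self σ a
  obtain ⟨d, hdc, hσ⟩ : ∃ d, Disjoint d c ∧ σ = d * c :=
    ⟨σ * c⁻¹, disjoint_mul_inv_of_mem_cycleFactorsFinset
      (cycleOf_mem_cycleFactorsFinset_iff.2 (mem_support.2 ha)), (inv_mul_cancel_right σ c).symm⟩
  have hdt : Disjoint d (swap a (c a)) := by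
    refine hdc.mono le_rfl ?_
    rw [support_swap (hca ▸ ha).symm, insert_subset_iff, singleton_subset_iff, apply_mem_support,
      and_self, mem_support, hca]
    exact ha
  have hsplit : swap a (σ a) * σ = d * (swap a (c a) * c) := by
    rw [← hca, hσ, ← mul_assoc, ← hdt.commute.eq, mul_assoc]
  rw [hsplit, (hdt.mul_right hdc).cycleDefect_mul, add_assoc,
    (isCycle_cycleOf σ ha).cycleDefect_swap_mul_add_one (hca ▸ ha), ← hdc.cycleDefect_mul, ← hσ]

theorem cycleDefect_swap_mul_lt {σ : Perm α} {a : α} (ha : σ a ≠ a) :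
    cycleDefect (swap a (σ a) * σ) < cycleDefect σ := by
  have := cycleDefect_swap_mul_add_one ha
  omega

theorem cycleDefect_swap_mul_of_apply_eq {σ : Perm α} {a b : α} (hab : a ≠ b) (ha : σ a = a) :
    cycleDefect (swap a b * σ) = cycleDefect σ + 1 := by
  have h := cycleDefect_swap_mul_add_one (σ := swap a b * σ) (a := a)
    (by rwa [mul_apply, ha, swap_apply_left, ne_comm])
  rw [mul_apply, ha, swap_apply_left, swap_mul_self_mul] at h
  exact h.symm

theorem cycleDefect_swap_mul_le (σ : Perm α) (a b : α) :
    cycleDefect (swap a b * σ) ≤ cycleDefect σ + 1 := by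
  induction hk : cycleDefect σ using Nat.strong_induction_on generalizing σ a b with
  | _ k ih =>
  subst hk
  by_cases hab : a = b
  · rw [hab, swap_self, ← one_def, one_mul]
    omega
  by_cases hb : σ b = b
  · exact (swap_comm a b ▸ cycleDefect_swap_mul_of_apply_eq (Ne.symm hab) hb).le
  have hσ' := cycleDefect_swap_mul_add_one hb
  by_cases hσb : σ b = a
  · rw [← hσb, swap_comm]
    omega
  set s := swap b (σ b)
  -- `s * σ` fixes `b` and has smaller defect; conjugating `(a b)` by `s` moves `b` to `σ b`.
  have hconj : swap a b * σ = s * (swap a (σ b) * (s * σ)) := by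
    have h := swap_apply_apply s a (σ b)
    rw [swap_apply_of_ne_of_ne hab (Ne.symm hσb), swap_apply_right, swap_inv] at h
    rw [h, mul_assoc, mul_assoc]
  have hfix : (swap a (σ b) * (s * σ)) b = b := by
    rw [mul_apply, mul_apply, swap_apply_right, swap_apply_of_ne_of_ne (Ne.symm hab) (Ne.symm hb)]
  rw [hconj, cycleDefect_swap_mul_of_apply_eq (Ne.symm hb) hfix]
  have := ih _ (by omega) (s * σ) a (σ b) rfl
  omega

theorem exists_list_isSwap_prod_eq (σ : Perm α) :
    ∃ l : List (Perm α), l.length = cycleDefect σ ∧ (∀ t ∈ l, t.IsSwap) ∧ l.prod = σ := by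
  induction hk : cycleDefect σ using Nat.strong_induction_on generalizing σ with
  | _ k ih =>
  by_cases hσ : σ = 1
  · subst hσ
    exact ⟨[], by simp [← hk], by simp, rfl⟩
  obtain ⟨a, ha⟩ : ∃ a, σ a ≠ a := by
    by_contra! h
    exact hσ (Equiv.ext h)
  have hlt := cycleDefect_swap_mul_add_one ha
  obtain ⟨l, hl, hswap, hprod⟩ := ih _ (by omega) (swap a (σ a) * σ) rfl
  refine ⟨swap a (σ a) :: l, by simp only [List.length_cons]; omega, ?_, ?_⟩
  · simpa [List.forall_mem_cons] using ⟨⟨a, σ a, ha.symm, rfl⟩, hswap⟩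
  · rw [List.prod_cons, hprod, swap_mul_self_mul]

theorem cycleDefect_prod_le_length {l : List (Perm α)} (hl : ∀ t ∈ l, t.IsSwap) :
    cycleDefect l.prod ≤ l.length := by
  induction l with
  | nil => simp
  | cons t l ih =>
    obtain ⟨a, b, -, rfl⟩ := hl t List.mem_cons_self
    have := cycleDefect_swap_mul_le l.prod a b
    have := ih fun s hs => hl s (List.mem_cons_of_mem _ hs)
    simp only [List.prod_cons, List.length_cons]
    omega

end CycleDefect

theorem eq_one_of_inv_apply_lt_imp_lt_apply {β : Type*} [LinearOrder β] [Fintype β]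
    {x : Perm β} (h : ∀ a, x⁻¹ a < a → a < x a) : x = 1 := by
  by_contra hx
  have hne : x.support.Nonempty := nonempty_iff_ne_empty.2 (mt support_eq_empty_iff.1 hx)
  set M := x.support.max' hne
  have hM : M ∈ x.support := max'_mem _ _
  have hxM : x⁻¹ M ∈ x.support := by rwa [← support_inv, apply_mem_support, support_inv]
  have hlt : x⁻¹ M < M := (le_max' _ _ hxM).lt_of_ne fun heq =>
    mem_support.1 hM (by rw [← inv_eq_iff_eq.1 heq])
  exact (h M hlt).not_ge (le_max' _ _ (apply_mem_support.2 hM))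

variable {n : ℕ}

def inversions (w : Perm (Fin n)) : Finset (Fin n × Fin n) :=
  univ.filter fun p => p.1 < p.2 ∧ w p.2 < w p.1

theorem mem_inversions {w : Perm (Fin n)} {p : Fin n × Fin n} :
    p ∈ inversions w ↔ p.1 < p.2 ∧ w p.2 < w p.1 := by
  simp [inversions]

theorem len_mul_swap_lt {u : Perm (Fin n)} {i j : Fin n} (hij : i < j) (hu : u j < u i) :
    len (u * swap i j) < len u := by
  set σ := swap i j
  -- Relabelling a pair by `σ` (when that keeps it increasing) injects the inversions of `u * σ`
  -- into those of `u` other than `(i, j)`.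
  let F : Fin n × Fin n → Fin n × Fin n := fun r => if σ r.1 < σ r.2 then (σ r.1, σ r.2) else r
  have hmaps : ∀ r ∈ inversions (u * σ), F r ∈ (inversions u).erase (i, j) := by
    rintro ⟨k, l⟩ hr
    simp only [F, σ, mem_erase, mem_inversions, swap_apply_def, Perm.mul_apply] at hr ⊢
    split_ifs at hr ⊢ <;> subst_vars <;> grind
  have hinj : Set.InjOn F (inversions (u * σ)) := by
    rintro ⟨k, l⟩ hr ⟨k', l'⟩ hr' he
    have hσ : ∀ x, σ (σ x) = x := swap_apply_self i j
    simp only [mem_coe, mem_inversions] at hr hr'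
    simp only [F] at he
    split_ifs at he with h h' h' <;> obtain ⟨h1, h2⟩ := Prod.mk.inj he
    · rw [σ.injective h1, σ.injective h2]
    · rw [← h1, ← h2, hσ, hσ] at h'; exact absurd hr.1 h'
    · rw [h1, h2, hσ, hσ] at h; exact absurd hr'.1 h
    · rw [h1, h2]
  calc len (u * σ) ≤ ((inversions u).erase (i, j)).card := card_le_card_of_injOn F hmaps hinj
    _ < len u := card_erase_lt_of_mem (mem_inversions.2 ⟨hij, hu⟩)

theorem len_swap_mul_lt {u : Perm (Fin n)} {a b : Fin n} (hab : a < b) (h : u⁻¹ b < u⁻¹ a) :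
    len (swap a b * u) < len u := by
  rw [swap_mul_eq_mul_swap, swap_comm]
  exact len_mul_swap_lt h (by simpa using hab)

end Equiv.Perm

open Equiv.Perm

theorem reachesIn_add_one {α : Type*} {r : α → α → Prop} {m : ℕ} {a b c : α}
    (h : reachesIn r m a b) (hbc : r b c) : reachesIn r (m + 1) a c := by
  induction m generalizing a with
  | zero => exact ⟨c, (show a = b from h) ▸ hbc, rfl⟩
  | succ m ih =>
    obtain ⟨a', ha, h'⟩ := h
    exact ⟨a', ha, ih h'⟩

theorem exists_reachesIn_of_reflTransGen {α : Type*} {r : α → α → Prop} {a b : α}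
    (h : Relation.ReflTransGen r a b) : ∃ m, reachesIn r m a b := by
  induction h with
  | refl => exact ⟨0, rfl⟩
  | tail _ hbc ih =>
    obtain ⟨m, hm⟩ := ih
    exact ⟨m + 1, reachesIn_add_one hm hbc⟩

section Bruhat

variable {n : ℕ}

theorem edge_swap_mul {u : Perm (Fin n)} {a b : Fin n} (hab : a < b) (h : u⁻¹ b < u⁻¹ a) :
    edge (swap a b * u) u :=
  ⟨⟨swap a b, ⟨a, b, hab.ne, rfl⟩, (swap_mul_self_mul a b u).symm⟩, len_swap_mul_lt hab h⟩

theorem reachesIn_al {v u : Perm (Fin n)} (h : bruhatLe v u) : reachesIn edge (al v u) v u :=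
  Nat.sInf_mem (exists_reachesIn_of_reflTransGen h)

theorem al_self (v : Perm (Fin n)) : al v v = 0 :=
  Nat.eq_zero_of_le_zero (Nat.sInf_le (show reachesIn edge 0 v v from rfl))

theorem al_le_add_one {v u' u : Perm (Fin n)} (h : bruhatLe v u') (e : edge u' u) :
    al v u ≤ al v u' + 1 :=
  Nat.sInf_le (reachesIn_add_one (reachesIn_al h) e)

theorem cycleDefect_mul_le_of_reachesIn {m : ℕ} {v u : Perm (Fin n)} (h : reachesIn edge m v u)
    (x : Perm (Fin n)) : cycleDefect (u * x) ≤ cycleDefect (v * x) + m := by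
  induction m generalizing v with
  | zero =>
    obtain rfl : v = u := h
    simp
  | succ m ih =>
    obtain ⟨v', ⟨⟨t, ⟨a, b, -, rfl⟩, rfl⟩, -⟩, hv'⟩ := h
    have := cycleDefect_swap_mul_le (v * x) a b
    have := ih hv'
    rw [mul_assoc] at this
    omega

theorem exists_edge_cycleDefect_lt {u w : Perm (Fin n)} (huw : u ≠ w) :
    (∃ u', edge u' u ∧ cycleDefect (u' * w⁻¹) < cycleDefect (u * w⁻¹)) ∨
      ∃ w', edge w' w ∧ cycleDefect (w' * u⁻¹) < cycleDefect (w * u⁻¹) := by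
  by_contra! h
  obtain ⟨hu, hw⟩ := h
  set x := u * w⁻¹ with hx
  have hwu : w * u⁻¹ = x⁻¹ := by rw [hx, mul_inv_rev, inv_inv]
  have hw_inv : w⁻¹ = u⁻¹ * x := by rw [hx, inv_mul_cancel_left]
  refine huw (mul_inv_eq_one.1 (eq_one_of_inv_apply_lt_imp_lt_apply fun a ha => ?_))
  have hxa : x a ≠ a := fun h => ha.ne (inv_eq_iff_eq.2 h.symm)
  have h1 : u⁻¹ a < u⁻¹ (x a) := by
    by_contra! hle
    have he : edge (swap a (x⁻¹ a) * w) w := by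
      rw [swap_comm]
      refine edge_swap_mul ha ?_
      rw [hw_inv]
      show u⁻¹ (x a) < u⁻¹ (x (x⁻¹ a))
      rw [show x (x⁻¹ a) = a from x.apply_symm_apply a]
      exact hle.lt_of_ne fun h => hxa (u⁻¹.injective h)
    refine (hw _ he).not_gt ?_
    rw [mul_assoc, hwu]
    exact cycleDefect_swap_mul_lt ha.ne
  by_contra! hle
  refine (hu _ (edge_swap_mul (hle.lt_of_ne hxa) h1)).not_gt ?_
  rw [swap_comm, mul_assoc]
  exact cycleDefect_swap_mul_lt hxa

theorem exists_bruhatLe_al_add_al_le (u w : Perm (Fin n)) :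
    ∃ v, bruhatLe v u ∧ bruhatLe v w ∧ al v u + al v w ≤ cycleDefect (u * w⁻¹) := by
  induction hk : cycleDefect (u * w⁻¹) using Nat.strong_induction_on generalizing u w with
  | _ k ih =>
  subst hk
  by_cases huw : u = w
  · subst huw
    exact ⟨u, .refl, .refl, by simp [al_self]⟩
  rcases exists_edge_cycleDefect_lt huw with ⟨u', he, hlt⟩ | ⟨w', he, hlt⟩
  · obtain ⟨v, hvu, hvw, hal⟩ := ih _ hlt u' w rfl
    have := al_le_add_one hvu he
    exact ⟨v, hvu.tail he, hvw, by omega⟩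
  · rw [cycleDefect_mul_inv_comm w', cycleDefect_mul_inv_comm w] at hlt
    obtain ⟨v, hvu, hvw, hal⟩ := ih _ hlt u w' rfl
    have := al_le_add_one hvw he
    exact ⟨v, hvu, hvw.tail he, by omega⟩

theorem absLen_eq_cycleDefect (σ : Perm (Fin n)) : absLen σ = cycleDefect σ := by
  obtain ⟨l, hl, hswap, hprod⟩ := exists_list_isSwap_prod_eq σ
  refine le_antisymm (Nat.sInf_le ⟨l, hl, hswap, hprod⟩) (le_csInf ⟨_, l, hl, hswap, hprod⟩ ?_)
  rintro k ⟨l', rfl, hswap', rfl⟩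
  exact cycleDefect_prod_le_length hswap'

theorem numCycles_add_cycleDefect (σ : Perm (Fin n)) : numCycles σ + cycleDefect σ = n := by
  have hfix : #(univ.filter fun i => σ i = i) + #σ.support = n := by
    simpa [support] using card_filter_add_card_filter_not (s := univ) (fun i => σ i = i)
  have hcf : #σ.cycleFactorsFinset = Multiset.card σ.cycleType := by
    rw [cycleType_def, Multiset.card_map]; rfl
  have := cycleDefect_add_card_cycleType σ
  rw [numCycles]
  omega

end Bruhat

/-- For all `u, w ∈ S_n` there exists `v ∈ S_n` with `v ≤ u`, `v ≤ w` and
`al(v,u) + al(v,w) = ℓ′(u w⁻¹) = n − c(u w⁻¹)`. -/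
theorem exists_meet_with_al_sum {n : ℕ} (u w : Perm (Fin n)) :
    ∃ v : Perm (Fin n), bruhatLe v u ∧ bruhatLe v w ∧
      al v u + al v w = absLen (u * w⁻¹) ∧
      absLen (u * w⁻¹) = n - numCycles (u * w⁻¹) := by
  obtain ⟨v, hvu, hvw, hle⟩ := exists_bruhatLe_al_add_al_le u w
  have hge : cycleDefect (u * w⁻¹) ≤ al v u + al v w :=
    calc cycleDefect (u * w⁻¹)
        ≤ cycleDefect (v * w⁻¹) + al v u := cycleDefect_mul_le_of_reachesIn (reachesIn_al hvu) _
      _ = cycleDefect (w * v⁻¹) + al v u := by rw [cycleDefect_mul_inv_comm]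
      _ ≤ cycleDefect (v * v⁻¹) + al v w + al v u := by
        gcongr; exact cycleDefect_mul_le_of_reachesIn (reachesIn_al hvw) _
      _ = al v u + al v w := by rw [mul_inv_cancel, cycleDefect_one]; ring
  have hn := numCycles_add_cycleDefect (u * w⁻¹)
  refine ⟨v, hvu, hvw, ?_, ?_⟩ <;> rw [absLen_eq_cycleDefect] <;> omega
end

section
/- If w ∈ S_n has the right hull property, then al(u,w) = ℓ′(u·w⁻¹) for all u ≤ w. -/
/-!
Write `c(v)` for the number of cycles of `v`, fixed points included. Then `ℓ′(v) = n - c(v)`, and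
left multiplication by a transposition `(a b)` changes `c` by one, raising it exactly when `a` and
`b` lie in a common cycle. Each Bruhat edge is such a multiplication, so a path from `u` to `w`
has at least `ℓ′(u w⁻¹)` edges.

Conversely, let `u < w` and let `p` be the first position where they differ. The corner counts
`#{a ≤ i | x a ≤ j}` can only decrease along Bruhat edges; comparing them for `u`, `w`, and the
permutation that is `u` on the cycle of `p` under `w⁻¹ u` and `w` elsewhere (which lies in the
right hull, hence below `w`), gives a `q > p` in that cycle such that exchanging the values of `u`
at `p` and `q` stays inside the right hull of `w`. The result is again below `w`, one Bruhat edge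
above `u`, and has `ℓ′(· w⁻¹)` one smaller, so induction produces a path of length `ℓ′(u w⁻¹)`.
-/

open Equiv

/-- The right hull of `w`: pairs `(i,j)` such that some `a ≤ i` has `w a ≥ j` and
some `b ≥ i` has `w b ≤ j`. -/
def rightHull {n : ℕ} (w : Perm (Fin n)) : Set (Fin n × Fin n) :=
  {p | (∃ a : Fin n, a ≤ p.1 ∧ p.2 ≤ w a) ∧ (∃ b : Fin n, p.1 ≤ b ∧ w b ≤ p.2)}

/-- `w` has the right hull property if `[e,w]` consists exactly of the permutations
whose diagram is contained in the right hull of `w`. -/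
def hasRightHullProperty {n : ℕ} (w : Perm (Fin n)) : Prop :=
  ∀ u : Perm (Fin n), bruhatLe u w ↔ ∀ i : Fin n, (i, u i) ∈ rightHull w

open Finset

namespace Equiv.Perm

variable {α : Type*}

noncomputable def numCycles (f : Perm α) : ℕ :=
  Nat.card (Quotient (SameCycle.setoid f))

theorem numCycles_one : numCycles (1 : Perm α) = Nat.card α :=
  (Nat.card_congr (Equiv.ofBijective _
    ⟨fun _ _ h => sameCycle_one.1 (Quotient.exact h), Quotient.mk_surjective⟩)).symm

variable [Finite α]

theorem SameCycle.mem_of_mapsTo {f : Perm α} {s : Set α} (hs : Set.MapsTo f s s) {x y : α}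
    (hxy : f.SameCycle x y) (hx : x ∈ s) : y ∈ s := by
  obtain ⟨k, rfl⟩ := hxy.exists_nat_pow_eq
  clear hxy
  induction k with
  | zero => exact hx
  | succ k ih =>
    rw [pow_succ', mul_apply]
    exact hs ih

theorem SameCycle.apply_eq_of_forall_apply_eq {β : Type*} {f : Perm α} {φ : α → β}
    (hφ : ∀ x, φ (f x) = φ x) {x y : α} (hxy : f.SameCycle x y) : φ x = φ y :=
  hxy.mem_of_mapsTo (s := {z | φ x = φ z}) (fun z hz => hz.trans (hφ z).symm) (Eq.refl _)

theorem numCycles_le_card (f : Perm α) : numCycles f ≤ Nat.card α :=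
  Nat.card_le_card_of_surjective _ Quotient.mk_surjective

variable [DecidableEq α]

theorem numCycles_le_numCycles_swap_mul_add_one (f : Perm α) (a b : α) :
    numCycles f ≤ numCycles (swap a b * f) + 1 := by
  classical
  -- the cycles of `swap a b * f` map onto those of `f` with the cycle of `b` merged into `a`'s
  let φ : α → Quotient (SameCycle.setoid f) :=
    fun x => if f.SameCycle x b then ⟦a⟧ else ⟦x⟧
  have hφ : ∀ x, φ ((swap a b * f) x) = φ x := by
    intro x
    have hfx : ⟦f x⟧ = (⟦x⟧ : Quotient (SameCycle.setoid f)) :=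
      Quotient.sound (sameCycle_apply_left.2 SameCycle.rfl)
    rw [mul_apply, swap_apply_def]
    split_ifs with ha hb <;> simp only [φ]
    · have hxa : f.SameCycle x a := ha ▸ sameCycle_apply_right.2 .rfl
      rw [if_pos .rfl]
      split_ifs
      exacts [rfl, Quotient.sound hxa.symm]
    · rw [ite_self, if_pos (hb ▸ sameCycle_apply_right.2 .rfl)]
    · simp only [sameCycle_apply_left, hfx]
  let ψ : Option (Quotient (SameCycle.setoid (swap a b * f))) → Quotient (SameCycle.setoid f) :=
    fun o => o.elim ⟦b⟧ (Quotient.lift φ fun _ _ => SameCycle.apply_eq_of_forall_apply_eq hφ)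
  have hψ : Function.Surjective ψ := by
    rintro ⟨x⟩
    by_cases hx : f.SameCycle x b
    · exact ⟨none, Quotient.sound hx.symm⟩
    · exact ⟨some ⟦x⟧, if_neg hx⟩
  simpa [numCycles, Finite.card_option] using Nat.card_le_card_of_surjective ψ hψ

theorem sameCycle_of_sameCycle_swap_mul {f : Perm α} {a b : α} (hab : f.SameCycle a b) {x y : α}
    (hxy : (swap a b * f).SameCycle x y) : f.SameCycle x y := by
  refine Quotient.exact (s := SameCycle.setoid f)
    (hxy.apply_eq_of_forall_apply_eq fun x => Quotient.sound (s := SameCycle.setoid f) ?_)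
  change f.SameCycle (swap a b (f x)) x
  have hfx : f.SameCycle (f x) x := sameCycle_apply_left.2 .rfl
  rw [swap_apply_def]
  split_ifs with ha hb
  · exact hab.symm.trans (ha ▸ hfx)
  · exact hab.trans (hb ▸ hfx)
  · exact hfx

theorem not_sameCycle_swap_mul {f : Perm α} {a b : α} (hne : a ≠ b) (hab : f.SameCycle a b) :
    ¬ (swap a b * f).SameCycle a b := by
  have hex : ∃ m, (f ^ m) a = b := hab.exists_nat_pow_eq
  set m := Nat.find hex
  have hm : (f ^ m) a = b := Nat.find_spec hex
  have hmin : ∀ j < m, (f ^ j) a ≠ b := fun j hj => Nat.find_min hex hj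
  have hm0 : m ≠ 0 := by rintro h; exact hne (by simpa [h] using hm)
  -- `swap a b * f` permutes the first `m` points of the `f`-orbit of `a` cyclically
  set S : Set α := {x | ∃ j < m, (f ^ j) a = x}
  have hmaps : Set.MapsTo (swap a b * f) S S := by
    rintro _ ⟨j, hj, rfl⟩
    have hfj : f ((f ^ j) a) = (f ^ (j + 1)) a := by rw [pow_succ', mul_apply]
    rw [mul_apply, hfj]
    rcases (show j + 1 ≤ m from hj).eq_or_lt with hjm | hjm
    · rw [hjm, hm, swap_apply_right]
      exact ⟨0, Nat.pos_of_ne_zero hm0, rfl⟩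
    · have hja : (f ^ (j + 1)) a ≠ a := by
        intro hja
        apply hmin (m - (j + 1)) (by omega)
        calc (f ^ (m - (j + 1))) a = (f ^ (m - (j + 1))) ((f ^ (j + 1)) a) := by rw [hja]
          _ = b := by rw [← mul_apply, ← pow_add, Nat.sub_add_cancel hjm.le, hm]
      rw [swap_apply_of_ne_of_ne hja (hmin _ hjm)]
      exact ⟨j + 1, hjm, rfl⟩
  intro h
  obtain ⟨j, hj, hjb⟩ := h.mem_of_mapsTo hmaps ⟨0, Nat.pos_of_ne_zero hm0, rfl⟩
  exact hmin j hj hjb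

theorem numCycles_swap_mul_of_sameCycle {f : Perm α} {a b : α} (hne : a ≠ b)
    (hab : f.SameCycle a b) : numCycles (swap a b * f) = numCycles f + 1 := by
  classical
  refine le_antisymm ?_ ?_
  · simpa [← mul_assoc] using numCycles_le_numCycles_swap_mul_add_one (swap a b * f) a b
  -- the cycles of `g` refine those of `f`, and `a`, `b` lie in different cycles of `g`
  set g := swap a b * f
  let φ : α → Option (Quotient (SameCycle.setoid f)) :=
    fun x => if g.SameCycle x b then none else some ⟦x⟧
  have hφ : ∀ x, φ (g x) = φ x := by
    intro x
    have hgx : (⟦g x⟧ : Quotient (SameCycle.setoid f)) = ⟦x⟧ :=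
      Quotient.sound (s := SameCycle.setoid f)
        (sameCycle_of_sameCycle_swap_mul hab (sameCycle_apply_left.2 .rfl))
    simp only [φ, sameCycle_apply_left, hgx]
  let ψ : Quotient (SameCycle.setoid g) → Option (Quotient (SameCycle.setoid f)) :=
    Quotient.lift φ fun _ _ => SameCycle.apply_eq_of_forall_apply_eq hφ
  have hψ : Function.Surjective ψ := by
    rintro (_ | ⟨⟨x⟩⟩)
    · exact ⟨⟦b⟧, if_pos .rfl⟩
    by_cases hx : g.SameCycle x b
    · refine ⟨⟦a⟧, (if_neg (not_sameCycle_swap_mul hne hab)).trans ?_⟩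
      exact congrArg some (Quotient.sound (s := SameCycle.setoid f)
        (hab.trans (sameCycle_of_sameCycle_swap_mul hab hx).symm))
    · exact ⟨⟦x⟧, if_neg hx⟩
  simpa [numCycles, Finite.card_option] using Nat.card_le_card_of_surjective ψ hψ

theorem exists_swap_factors (f : Perm α) :
    ∃ l : List (Perm α), (∀ t ∈ l, t.IsSwap) ∧ l.prod = f ∧
      l.length + numCycles f = Nat.card α := by
  by_cases hf : f = 1
  · exact ⟨[], by simp, by simp [hf], by simp [hf, numCycles_one]⟩
  obtain ⟨a, ha⟩ : ∃ a, f a ≠ a := not_forall.1 fun h => hf (Equiv.ext h)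
  have hcyc := numCycles_swap_mul_of_sameCycle (Ne.symm ha) (sameCycle_apply_right.2 .rfl)
  have hle := numCycles_le_card (swap a (f a) * f)
  obtain ⟨l, hl, hprod, hlen⟩ := exists_swap_factors (swap a (f a) * f)
  refine ⟨swap a (f a) :: l, ?_, ?_, ?_⟩
  · exact List.forall_mem_cons.2 ⟨⟨a, f a, Ne.symm ha, rfl⟩, hl⟩
  · simp [hprod, ← mul_assoc]
  · simp only [List.length_cons]
    omega
termination_by Nat.card α - numCycles f

theorem card_le_length_add_numCycles_prod (l : List (Perm α)) (hl : ∀ t ∈ l, t.IsSwap) :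
    Nat.card α ≤ l.length + numCycles l.prod := by
  induction l with
  | nil => simp [numCycles_one]
  | cons t l ih =>
    obtain ⟨a, b, -, rfl⟩ := hl t List.mem_cons_self
    have := numCycles_le_numCycles_swap_mul_add_one l.prod a b
    have := ih fun t ht => hl t (List.mem_cons_of_mem _ ht)
    simp only [List.length_cons, List.prod_cons]
    omega

end Equiv.Perm

open Equiv.Perm

section AbsLen

variable {n : ℕ}

theorem absLen_eq_sub_numCycles (v : Perm (Fin n)) : absLen v = n - v.numCycles := by
  obtain ⟨l, hl, hprod, hlen⟩ := exists_swap_factors v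
  rw [Nat.card_fin] at hlen
  refine le_antisymm (Nat.sInf_le ⟨l, by omega, hl, hprod⟩)
    (le_csInf ⟨_, l, rfl, hl, hprod⟩ ?_)
  rintro k ⟨l', rfl, hl', rfl⟩
  have := card_le_length_add_numCycles_prod l' hl'
  rw [Nat.card_fin] at this
  omega

theorem absLen_one : absLen (1 : Perm (Fin n)) = 0 := by
  simp [absLen_eq_sub_numCycles, numCycles_one]

theorem absLen_swap_mul_le (v : Perm (Fin n)) (a b : Fin n) :
    absLen (swap a b * v) ≤ absLen v + 1 := by
  have := numCycles_le_numCycles_swap_mul_add_one v a b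
  rw [absLen_eq_sub_numCycles, absLen_eq_sub_numCycles]
  omega

theorem absLen_swap_mul_of_sameCycle {v : Perm (Fin n)} {a b : Fin n} (hne : a ≠ b)
    (hab : v.SameCycle a b) : absLen (swap a b * v) + 1 = absLen v := by
  have := numCycles_swap_mul_of_sameCycle hne hab
  have := numCycles_le_card (swap a b * v)
  rw [Nat.card_fin] at this
  rw [absLen_eq_sub_numCycles, absLen_eq_sub_numCycles]
  omega

theorem absLen_le_of_reachesIn {m : ℕ} {u w : Perm (Fin n)} (h : reachesIn edge m u w) :
    absLen (u * w⁻¹) ≤ m := by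
  induction m generalizing u with
  | zero => rw [show u = w from h, mul_inv_cancel, absLen_one]
  | succ m ih =>
    obtain ⟨v, ⟨⟨_, ⟨c, d, -, rfl⟩, rfl⟩, -⟩, hv⟩ := h
    calc absLen (u * w⁻¹) = absLen (swap c d * (swap c d * u * w⁻¹)) := by
          rw [← mul_assoc, ← mul_assoc, swap_mul_self, one_mul]
      _ ≤ m + 1 := (absLen_swap_mul_le _ c d).trans (by simpa using ih hv)

end AbsLen

section Bruhat

variable {n : ℕ}

theorem len_lt_len_mul_swap {z : Perm (Fin n)} {p q : Fin n} (hpq : p < q)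
    (hz : z p < z q) : len z < len (z * swap p q) := by
  -- An inversion lost by the swap has an end at `p` or `q` and its other value between `z p` and
  -- `z q`; exchanging `p` and `q` in it gives an inversion gained by the swap, other than `(p, q)`.
  have key : ∀ i j, i < j → z j < z i → ¬ (i < j ∧ z (swap p q j) < z (swap p q i)) →
      (swap p q i < swap p q j ∧ ¬ (z (swap p q j) < z (swap p q i))) ∧
        (swap p q i, swap p q j) ≠ (p, q) := by
    intro i j hij hzij hy
    have hinj : ∀ a b, z a = z b → a = b := fun a b h => z.injective h
    rw [swap_apply_def, swap_apply_def] at *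
    split_ifs at * <;> grind
  unfold len
  rw [← card_sdiff_lt_card_sdiff_iff]
  have hpq_mem : (p, q) ∈ univ.filter (fun r : Fin n × Fin n =>
      r.1 < r.2 ∧ (z * swap p q) r.2 < (z * swap p q) r.1) \
      univ.filter (fun r : Fin n × Fin n => r.1 < r.2 ∧ z r.2 < z r.1) := by
    simp only [mem_sdiff, mem_filter, mem_univ, true_and]
    simp only [Perm.mul_apply, swap_apply_left, swap_apply_right]
    exact ⟨⟨hpq, hz⟩, fun h => h.2.not_gt hz⟩
  refine lt_of_le_of_lt (card_le_card_of_injOn (Prod.map (swap p q) (swap p q)) ?_ ?_)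
    (card_erase_lt_of_mem hpq_mem)
  · rintro ⟨i, j⟩ hr
    simp only [coe_sdiff, Set.mem_sdiff, mem_coe, mem_filter, mem_univ, true_and] at hr
    simp only [Perm.mul_apply] at hr
    obtain ⟨⟨hmem, hne⟩, hnew⟩ := key i j hr.1.1 hr.1.2 hr.2
    simp only [coe_erase, coe_sdiff, Set.mem_sdiff, Set.mem_singleton_iff, mem_coe, mem_filter,
      mem_univ, true_and, Prod.map]
    simp only [Perm.mul_apply, swap_apply_self]
    exact ⟨⟨⟨hmem, hr.1.2⟩, fun h => hne h.2⟩, hnew⟩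
  · exact ((swap p q).injective.prodMap (swap p q).injective).injOn

def cornerCount (x : Perm (Fin n)) (i j : Fin n) : ℕ :=
  #{a | a ≤ i ∧ x a ≤ j}

theorem cornerCount_mul_swap_le {x : Perm (Fin n)} {p q : Fin n} (hpq : p < q) (hx : x p < x q)
    (i j : Fin n) : cornerCount (x * swap p q) i j ≤ cornerCount x i j := by
  have key : ∀ a, a ≤ i → x (swap p q a) ≤ j → ¬ (a ≤ i ∧ x a ≤ j) →
      (swap p q a ≤ i ∧ x (swap p q a) ≤ j) ∧ ¬ (swap p q a ≤ i ∧ x a ≤ j) := by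
    intro a hai haj hna
    have hinj : ∀ a b, x a = x b → a = b := fun a b h => x.injective h
    rw [swap_apply_def] at *
    split_ifs at * <;> grind
  unfold cornerCount
  rw [← card_sdiff_le_card_sdiff_iff]
  refine card_le_card_of_injOn (swap p q) ?_ (swap p q).injective.injOn
  intro a ha
  simp only [coe_sdiff, Set.mem_sdiff, mem_coe, mem_filter, mem_univ, true_and] at ha ⊢
  simp only [Perm.mul_apply, swap_apply_self] at ha ⊢
  exact key a ha.1.1 ha.1.2 ha.2

theorem cornerCount_le_of_edge {x y : Perm (Fin n)} (h : edge x y) (i j : Fin n) :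
    cornerCount y i j ≤ cornerCount x i j := by
  obtain ⟨⟨_, ⟨c, d, hcd, rfl⟩, rfl⟩, hlen⟩ := h
  obtain ⟨p, q, hpq, hswap⟩ : ∃ p q, p < q ∧ swap c d * x = x * swap p q := by
    have hsw : swap c d * x = x * swap (x⁻¹ c) (x⁻¹ d) := by simp [mul_swap_eq_swap_mul]
    rcases lt_or_gt_of_ne (x⁻¹.injective.ne hcd) with h | h
    · exact ⟨_, _, h, hsw⟩
    · exact ⟨_, _, h, hsw.trans (by rw [swap_comm])⟩
  rw [hswap] at hlen ⊢
  refine cornerCount_mul_swap_le hpq ((x.injective.ne hpq.ne).lt_of_le ?_) i j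
  by_contra! hx
  have := len_lt_len_mul_swap (z := x * swap p q) hpq (by simpa using hx)
  rw [mul_assoc, swap_mul_self, mul_one] at this
  exact this.not_gt hlen

theorem cornerCount_le_of_bruhatLe {u w : Perm (Fin n)} (h : bruhatLe u w) (i j : Fin n) :
    cornerCount w i j ≤ cornerCount u i j := by
  induction h with
  | refl => exact le_rfl
  | tail _ he ih => exact (cornerCount_le_of_edge he i j).trans ih

theorem card_filter_apply_le (x : Perm (Fin n)) (j : Fin n) : #{a | x a ≤ j} = j + 1 := by
  rw [← Fin.card_Iic j, ← card_map x.toEmbedding]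
  congr 1
  ext b
  simp

theorem le_of_bruhatLe_of_apply_le {u w : Perm (Fin n)} (huw : bruhatLe u w) {i j : Fin n}
    (hw : ∀ a, w a ≤ j → a ≤ i) {a : Fin n} (ha : u a ≤ j) : a ≤ i := by
  have hsub : univ.filter (fun a => a ≤ i ∧ u a ≤ j) ⊆ univ.filter (fun a => u a ≤ j) :=
    fun a => by simp +contextual
  have hw' : cornerCount w i j = j + 1 := by
    rw [cornerCount, ← card_filter_apply_le w j]
    congr 1
    ext a
    simpa using hw a
  have heq := eq_of_subset_of_card_le hsub <| by
    rw [card_filter_apply_le, ← hw']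
    exact cornerCount_le_of_bruhatLe huw i j
  have : a ∈ univ.filter (fun a => u a ≤ j) := by simpa using ha
  rw [← heq] at this
  exact (mem_filter.1 this).2.1

theorem apply_lt_apply_of_bruhatLe {u w : Perm (Fin n)} (huw : bruhatLe u w) {p : Fin n}
    (hagree : ∀ i < p, u i = w i) (hp : u p ≠ w p) : u p < w p := by
  refine hp.lt_of_le ?_
  by_contra! hwu
  have hsub : univ.filter (fun a => a ≤ p ∧ u a ≤ w p) ⊆
      (univ.filter fun a => a ≤ p ∧ w a ≤ w p).erase p := by
    intro a
    simp only [mem_filter, mem_univ, true_and, mem_erase]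
    rintro ⟨hap, hua⟩
    have hap' : a < p := hap.lt_of_ne (by rintro rfl; exact hua.not_gt hwu)
    exact ⟨hap'.ne, hap, hagree a hap' ▸ hua⟩
  have := (card_le_card hsub).trans_lt (card_erase_lt_of_mem (by simp))
  exact this.not_ge (cornerCount_le_of_bruhatLe huw p (w p))

theorem cornerCount_eq_add_card {x : Perm (Fin n)} {i j k : Fin n} (hjk : j ≤ k)
    (hx : ∀ a, x a ≤ j → a ≤ i) :
    cornerCount x i k = (j + 1) + #{a | a ≤ i ∧ j < x a ∧ x a ≤ k} := by
  rw [cornerCount, ← card_filter_add_card_filter_not (fun a => x a ≤ j), filter_filter,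
    filter_filter, ← card_filter_apply_le x j]
  congr 2
  · ext a
    simp only [mem_filter, mem_univ, true_and]
    exact ⟨fun h => h.2, fun h => ⟨⟨hx a h, h.trans hjk⟩, h⟩⟩
  · ext a
    simp only [mem_filter, mem_univ, true_and, not_le]
    tauto

end Bruhat

section RightHull

variable {n : ℕ} {w : Perm (Fin n)}

theorem exists_sameCycle_of_rightHullProperty (h : hasRightHullProperty w) {u : Perm (Fin n)}
    (hu : bruhatLe u w) {p β : Fin n} (hp : u p < w p) (hβ : ∀ b, w b ≤ u p → b ≤ β) :
    ∃ q, (w⁻¹ * u).SameCycle p q ∧ q ≤ β ∧ u p < u q ∧ u q ≤ w p := by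
  -- Otherwise `v`, which is `u` on the cycle of `p` and `w` elsewhere, lies in the hull, hence
  -- below `w`, but has fewer values in `(u p, w p]` at positions `≤ β` than `w` has.
  by_contra! hcon
  set z := w⁻¹ * u
  set v := w * z.cycleOf p
  have hv_on : ∀ i, z.SameCycle p i → v i = u i := fun i hi => by
    simp [v, hi.cycleOf_apply, z]
  have hv_off : ∀ i, ¬ z.SameCycle p i → v i = w i := fun i hi => by
    simp [v, cycleOf_apply_of_not_sameCycle hi]
  have hv : bruhatLe v w := by
    refine (h v).2 fun i => ?_
    by_cases hi : z.SameCycle p i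
    · rw [hv_on i hi]; exact (h u).1 hu i
    · rw [hv_off i hi]; exact ⟨⟨i, le_rfl, le_rfl⟩, ⟨i, le_rfl, le_rfl⟩⟩
  have hpβ : p ≤ β := le_of_bruhatLe_of_apply_le hu hβ le_rfl
  have hsub : univ.filter (fun a => a ≤ β ∧ u p < v a ∧ v a ≤ w p) ⊆
      (univ.filter fun a => a ≤ β ∧ u p < w a ∧ w a ≤ w p).erase p := by
    intro a
    simp only [mem_filter, mem_univ, true_and, mem_erase]
    rintro ⟨haβ, hlt, hle⟩
    by_cases ha : z.SameCycle p a
    · rw [hv_on a ha] at hlt hle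
      exact absurd hle (hcon a ha haβ hlt).not_ge
    · refine ⟨fun hap => ha (hap ▸ .rfl), ?_⟩
      rw [hv_off a ha] at hlt hle
      exact ⟨haβ, hlt, hle⟩
  have hlt := (card_le_card hsub).trans_lt (card_erase_lt_of_mem (by simp [hpβ, hp]))
  have hw := cornerCount_eq_add_card (k := w p) hp.le hβ
  have hv' := cornerCount_eq_add_card (k := w p) hp.le fun b => le_of_bruhatLe_of_apply_le hv hβ
  have := cornerCount_le_of_bruhatLe hv β (w p)
  omega

theorem exists_edge_of_rightHullProperty (h : hasRightHullProperty w) {u : Perm (Fin n)}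
    (hu : bruhatLe u w) (hne : u ≠ w) :
    ∃ u', edge u u' ∧ bruhatLe u' w ∧ absLen (u' * w⁻¹) + 1 = absLen (u * w⁻¹) := by
  obtain ⟨p, hp, hpmin⟩ := (univ.filter fun i => u i ≠ w i).exists_min_image id
    (by simpa [Finset.Nonempty] using DFunLike.ne_iff.1 hne)
  simp only [mem_filter, mem_univ, true_and, id] at hp hpmin
  have hup : u p < w p :=
    apply_lt_apply_of_bruhatLe hu (fun i hi => not_not.1 fun h => (hpmin i h).not_gt hi) hp
  obtain ⟨β, hβ, hβmax⟩ := (univ.filter fun b => w b ≤ u p).exists_max_image id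
    ⟨w⁻¹ (u p), by simp⟩
  simp only [mem_filter, mem_univ, true_and, id] at hβ hβmax
  obtain ⟨q, hcyc, hqβ, hpq_lt, hqw⟩ := exists_sameCycle_of_rightHullProperty h hu hup hβmax
  have hpβ : p ≤ β := le_of_bruhatLe_of_apply_le hu hβmax le_rfl
  have hpq : p < q := by
    have hqp : p ≠ q := by rintro rfl; exact hpq_lt.false
    refine (hpmin q fun hq => hqp (hcyc.eq_of_right ?_)).lt_of_ne hqp
    simp [Function.IsFixedPt, hq]
  refine ⟨u * swap p q,
    ⟨⟨swap (u p) (u q), ⟨_, _, hpq_lt.ne, rfl⟩, mul_swap_eq_swap_mul u p q⟩,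
      len_lt_len_mul_swap hpq hpq_lt⟩,
    (h _).2 fun i => ?_, ?_⟩
  · rcases eq_or_ne i p with rfl | hip
    · simpa using ⟨⟨i, le_rfl, hqw⟩, ⟨β, hpβ, hβ.trans hpq_lt.le⟩⟩
    rcases eq_or_ne i q with rfl | hiq
    · simpa using ⟨⟨p, hpq.le, hup.le⟩, ⟨β, hqβ, hβ⟩⟩
    rw [mul_apply, swap_apply_of_ne_of_ne hip hiq]
    exact (h u).1 hu i
  · rw [mul_swap_eq_swap_mul, mul_assoc]
    refine absLen_swap_mul_of_sameCycle hpq_lt.ne ?_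
    simpa [mul_assoc] using hcyc.conj (g := u)

theorem reachesIn_absLen_of_rightHullProperty (h : hasRightHullProperty w) {u : Perm (Fin n)}
    (hu : bruhatLe u w) : reachesIn edge (absLen (u * w⁻¹)) u w := by
  by_cases hne : u = w
  · subst hne
    rw [mul_inv_cancel, absLen_one]
    rfl
  obtain ⟨u', hedge, hu', habs⟩ := exists_edge_of_rightHullProperty h hu hne
  rw [← habs]
  exact ⟨u', hedge, reachesIn_absLen_of_rightHullProperty h hu'⟩
termination_by absLen (u * w⁻¹)

end RightHull

/-- If `w ∈ S_n` has the right hull property, then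
`al(u,w) = ℓ′(u w⁻¹)` for all `u ≤ w`. -/
theorem al_eq_absLen_of_rightHullProperty {n : ℕ} (w : Perm (Fin n))
    (h : hasRightHullProperty w) :
    ∀ u : Perm (Fin n), bruhatLe u w → al u w = absLen (u * w⁻¹) := by
  intro u hu
  have hreach := reachesIn_absLen_of_rightHullProperty h hu
  exact le_antisymm (Nat.sInf_le hreach) (le_csInf ⟨_, hreach⟩ fun _ => absLen_le_of_reachesIn)
end

section
/- Suppose w ∈ S_n has the right hull property and u ≤ w. Let c ∈ S_n be a nontrivial cycle occurring in the disjoint cycle decomposition of w⁻¹ ∘ u, where composition is defined by (w⁻¹ ∘ u)(i) = w⁻¹(u(i)). Then w ∘ c ≤ w and w ∘ c ≠ w. -/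
open Equiv

/-- Suppose `w ∈ S_n` has the right hull property and `u ≤ w`. Let
`c ∈ S_n` be a nontrivial cycle occurring in the disjoint cycle decomposition of
`w⁻¹ ∘ u` (composition `(w⁻¹ ∘ u)(i) = w⁻¹(u(i))`, i.e. the product `w⁻¹ * u`).
Then `w ∘ c ≤ w` and `w ∘ c ≠ w`. -/
theorem cycle_mul_lt {n : ℕ} (w u : Perm (Fin n)) (hw : hasRightHullProperty w)
    (hu : bruhatLe u w) (c : Perm (Fin n))
    (hc : c ∈ (w⁻¹ * u).cycleFactorsFinset) :
    bruhatLe (w * c) w ∧ w * c ≠ w := by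
  obtain ⟨hcyc, hagree⟩ := (Equiv.Perm.mem_cycleFactorsFinset_iff).mp hc
  constructor
  · rw [hw]
    intro i
    by_cases h : i ∈ c.support
    · have hi : (w * c) i = u i := by
        have := hagree i h
        simp only [Perm.mul_apply] at this ⊢
        rw [this]; exact Equiv.apply_symm_apply w (u i)
      rw [hi]
      exact (hw u).mp hu i
    · have hci : c i = i := Equiv.Perm.notMem_support.mp h
      have hi : (w * c) i = w i := by simp [Perm.mul_apply, hci]
      rw [hi]
      exact ⟨⟨i, le_refl i, le_refl _⟩, ⟨i, le_refl i, le_refl _⟩⟩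
  · intro heq
    have h1 : c = 1 := mul_left_cancel (a := w) (by rw [mul_one]; exact heq)
    exact hcyc.ne_one h1
end
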